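/- Let C_pres ∈ ℝ^{n×m} admit a thin singular value decomposition C_pres = U1 Σ Vᵀ with U1 ∈ ℝ^{n×r}, V ∈ ℝ^{m×r} having orthonormal columns and Σ = diag(σ_1 ≥ ⋯ ≥ σ_r > 0). Fix k with 0 ≤ k < r, let U_k ∈ ℝ^{n×k} be the first k columns of U1, and let U_{2,k} ∈ ℝ^{n×(n−k)} satisfy U_{2,k}ᵀ U_{2,k} = I_{n−k} and U_k U_kᵀ + U_{2,k} U_{2,k}ᵀ = I_n. Let W0 ∈ ℝ^{p×n}, Z ∈ ℝ^{p×(n−k)}, and set W' = W0 + Z U_{2,k}ᵀ. Then for every column p_i of C_pres, ‖(W' − W0) p_i‖₂ ≤ ‖Z‖₂ · σ_{k+1}, where ‖Z‖₂ is the spectral norm of Z. Moreover W' u = W0 u for every u in the column space of U_k, so the top-k principal directions of the preserved subspace are preserved exactly. -/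

import Mathlib

/-! Since `U_{2,k}ᵀ U_k = 0`, the part of a column `U1 Σ vᵢ` of `C_pres` lying along the first `k`
columns of `U1` is annihilated by `U_{2,k}ᵀ`; what survives is `U_{2,k}ᵀ U1 t` for the tail
`t = (σ_j v_{ij})_{j ≥ k}`. As `U_{2,k}ᵀ` is a contraction and `U1` an isometry, this has norm at most
`‖t‖ ≤ σ_{k+1} ‖vᵢ‖ ≤ σ_{k+1}`, the rows of the isometry `V` having norm at most one. -/

open Matrix

/-- Euclidean (ℓ²) norm of a real vector. -/
noncomputable def euclidNorm {n : ℕ} (v : Fin n → ℝ) : ℝ :=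
  ‖(WithLp.equiv 2 (Fin n → ℝ)).symm v‖

/-- Spectral (ℓ²→ℓ²) operator norm of a real matrix. -/
noncomputable def specNorm {m n : ℕ} (A : Matrix (Fin m) (Fin n) ℝ) : ℝ :=
  ‖LinearMap.toContinuousLinearMap (Matrix.toEuclideanLin A)‖

section euclidNorm

variable {m n : ℕ}

lemma euclidNorm_nonneg (v : Fin n → ℝ) : 0 ≤ euclidNorm v := norm_nonneg _

lemma euclidNorm_sq (v : Fin n → ℝ) : euclidNorm v ^ 2 = v ⬝ᵥ v := by
  rw [euclidNorm, EuclideanSpace.real_norm_sq_eq]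
  simp [dotProduct, sq]

lemma dotProduct_le_euclidNorm_mul (v w : Fin n → ℝ) : v ⬝ᵥ w ≤ euclidNorm v * euclidNorm w := by
  simpa [euclidNorm, EuclideanSpace.inner_eq_star_dotProduct, dotProduct_comm] using
    real_inner_le_norm (WithLp.toLp 2 v) (WithLp.toLp 2 w)

lemma specNorm_nonneg (A : Matrix (Fin m) (Fin n) ℝ) : 0 ≤ specNorm A := norm_nonneg _

lemma euclidNorm_mulVec_le (A : Matrix (Fin m) (Fin n) ℝ) (v : Fin n → ℝ) :
    euclidNorm (A *ᵥ v) ≤ specNorm A * euclidNorm v := by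
  simpa [euclidNorm, specNorm, Matrix.toLpLin_toLp] using
    (LinearMap.toContinuousLinearMap (Matrix.toEuclideanLin A)).le_opNorm
      ((WithLp.equiv 2 (Fin n → ℝ)).symm v)

lemma euclidNorm_le_mul_of_abs_le {v w : Fin n → ℝ} {c : ℝ} (hc : 0 ≤ c)
    (h : ∀ j, |v j| ≤ c * |w j|) : euclidNorm v ≤ c * euclidNorm w := by
  rw [← pow_le_pow_iff_left₀ (euclidNorm_nonneg v) (mul_nonneg hc (euclidNorm_nonneg w))
    two_ne_zero, mul_pow, euclidNorm_sq, euclidNorm_sq, dotProduct, dotProduct, Finset.mul_sum]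
  refine Finset.sum_le_sum fun j _ => ?_
  calc v j * v j = |v j| * |v j| := (abs_mul_abs_self _).symm
    _ ≤ (c * |w j|) * (c * |w j|) := mul_self_le_mul_self (abs_nonneg _) (h j)
    _ = c ^ 2 * (w j * w j) := by rw [← abs_mul_abs_self (w j)]; ring

lemma euclidNorm_single_one (i : Fin n) : euclidNorm (Pi.single i 1) = 1 := by
  rw [← sq_eq_sq₀ (euclidNorm_nonneg _) zero_le_one, euclidNorm_sq]
  simp

lemma euclidNorm_mulVec_of_transpose_mul_self (A : Matrix (Fin m) (Fin n) ℝ) (hA : Aᵀ * A = 1)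
    (v : Fin n → ℝ) : euclidNorm (A *ᵥ v) = euclidNorm v := by
  rw [← sq_eq_sq₀ (euclidNorm_nonneg _) (euclidNorm_nonneg _), euclidNorm_sq, euclidNorm_sq,
    dotProduct_mulVec, ← mulVec_transpose, mulVec_mulVec, hA, one_mulVec]

lemma euclidNorm_transpose_mulVec_le (A : Matrix (Fin m) (Fin n) ℝ) (hA : Aᵀ * A = 1)
    (v : Fin m → ℝ) : euclidNorm (Aᵀ *ᵥ v) ≤ euclidNorm v := by
  rcases (euclidNorm_nonneg (Aᵀ *ᵥ v)).eq_or_lt with h0 | hpos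
  · rw [← h0]; exact euclidNorm_nonneg v
  refine le_of_mul_le_mul_left ?_ hpos
  calc euclidNorm (Aᵀ *ᵥ v) * euclidNorm (Aᵀ *ᵥ v) = (A *ᵥ (Aᵀ *ᵥ v)) ⬝ᵥ v := by
        rw [← sq, euclidNorm_sq, dotProduct_comm, dotProduct_mulVec, ← mulVec_transpose,
          transpose_transpose]
    _ ≤ euclidNorm (A *ᵥ (Aᵀ *ᵥ v)) * euclidNorm v := dotProduct_le_euclidNorm_mul _ _
    _ = euclidNorm (Aᵀ *ᵥ v) * euclidNorm v := by
        rw [euclidNorm_mulVec_of_transpose_mul_self A hA]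

lemma euclidNorm_row_le_one (A : Matrix (Fin m) (Fin n) ℝ) (hA : Aᵀ * A = 1) (i : Fin m) :
    euclidNorm (A i) ≤ 1 := by
  have h := euclidNorm_transpose_mulVec_le A hA (Pi.single i 1)
  rw [mulVec_single_one, euclidNorm_single_one] at h
  exact h

lemma euclidNorm_tail_mul_le {σ : Fin n → ℝ} (hσ0 : ∀ j, 0 ≤ σ j) (hσ : Antitone σ)
    (v : Fin n → ℝ) (k : Fin n) :
    euclidNorm (fun j => if k ≤ j then σ j * v j else 0) ≤ σ k * euclidNorm v := by
  refine euclidNorm_le_mul_of_abs_le (hσ0 k) fun j => ?_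
  split_ifs with hkj
  · rw [abs_mul, abs_of_nonneg (hσ0 j)]
    exact mul_le_mul_of_nonneg_right (hσ hkj) (abs_nonneg _)
  · rw [abs_zero]
    exact mul_nonneg (hσ0 k) (abs_nonneg _)

end euclidNorm

namespace Matrix

variable {l m n o R : Type*} [CommRing R]

lemma submatrix_transpose_mul_submatrix_eq_one [Fintype m] [DecidableEq l] [DecidableEq n]
    {A : Matrix m n R} (hA : Aᵀ * A = 1) {e : l → n} (he : Function.Injective e) :
    (A.submatrix id e)ᵀ * A.submatrix id e = 1 := by
  rw [transpose_submatrix, ← submatrix_mul _ _ _ _ _ Function.bijective_id, hA, submatrix_one _ he]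

lemma transpose_mul_eq_zero_of_mul_transpose_add_mul_transpose_eq_one [Fintype m]
    [Fintype n] [DecidableEq n] [Fintype o] [DecidableEq o] [DecidableEq m]
    {A : Matrix m n R} {B : Matrix m o R}
    (hA : Aᵀ * A = 1) (hB : Bᵀ * B = 1) (h : A * Aᵀ + B * Bᵀ = 1) : Bᵀ * A = 0 := by
  have hBBA : B * (Bᵀ * A) = 0 := by
    have := congrArg (· * A) h
    simp only [Matrix.add_mul, Matrix.mul_assoc, hA, Matrix.mul_one, Matrix.one_mul] at this
    exact add_eq_left.mp this
  simpa [← Matrix.mul_assoc, hB] using congrArg (Bᵀ * ·) hBBA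

lemma mulVec_eq_submatrix_mulVec_of_eq_zero [Fintype l] [Fintype n] (A : Matrix m n R)
    {e : l → n} (he : Function.Injective e) {y : n → R} (hy : ∀ j ∉ Set.range e, y j = 0) :
    A *ᵥ y = A.submatrix id e *ᵥ (y ∘ e) := by
  ext i
  exact (Fintype.sum_of_injective e he _ _ (fun j hj => by simp [hy j hj]) fun _ => rfl).symm

lemma mulVec_mulVec_eq_of_mul_submatrix_eq_zero [Fintype l] [Fintype m] [Fintype n]
    {B : Matrix o m R} {A : Matrix m n R} {e : l → n} (he : Function.Injective e)
    (hBA : B * A.submatrix id e = 0) {y z : n → R} (hyz : ∀ j ∉ Set.range e, y j = z j) :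
    B *ᵥ (A *ᵥ y) = B *ᵥ (A *ᵥ z) := by
  rw [← sub_eq_zero, ← mulVec_sub, ← mulVec_sub, mulVec_eq_submatrix_mulVec_of_eq_zero A he
    (y := y - z) fun j hj => sub_eq_zero.mpr (hyz j hj), mulVec_mulVec, hBA, zero_mulVec]

lemma col_mul_diagonal_mul_transpose [Fintype n] [DecidableEq n] (U : Matrix m n R) (σ : n → R)
    (V : Matrix o n R) (i : o) : (fun a => (U * diagonal σ * Vᵀ) a i) = U *ᵥ (σ * V i) := by
  ext a
  rw [mul_apply]
  simp only [mul_diagonal, transpose_apply, mulVec, dotProduct, Pi.mul_apply, mul_assoc]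

end Matrix

/-- **Preservation Bound for Truncated Cases.**
Let `C_pres = U1 Σ Vᵀ` be a thin SVD with decreasing positive singular values,
`U_k` the first `k` columns of `U1` (`k < r`), `U_{2,k}` an orthonormal basis
of the orthogonal complement of `span(U_k)`, and `W' = W0 + Z U_{2,k}ᵀ`.
Then every column `p_i` of `C_pres` satisfies
`‖(W' − W0) p_i‖₂ ≤ ‖Z‖₂ σ_{k+1}`, and `W'` agrees with `W0` on the
column space of `U_k` (exact preservation of the top-`k` directions). -/
theorem truncated_preservation_bound
    {n m r p : ℕ}
    (Cpres : Matrix (Fin n) (Fin m) ℝ)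
    (U1 : Matrix (Fin n) (Fin r) ℝ)
    (V : Matrix (Fin m) (Fin r) ℝ)
    (σ : Fin r → ℝ)
    (hU1 : U1ᵀ * U1 = 1)
    (hV : Vᵀ * V = 1)
    (hσpos : ∀ i, 0 < σ i)
    (hσdec : ∀ i j : Fin r, i ≤ j → σ j ≤ σ i)
    (hSVD : Cpres = U1 * Matrix.diagonal σ * Vᵀ)
    (k : ℕ) (hk : k < r)
    (Uk : Matrix (Fin n) (Fin k) ℝ)
    (hUk : Uk = U1.submatrix id (Fin.castLE hk.le))
    (U2k : Matrix (Fin n) (Fin (n - k)) ℝ)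
    (hU2k : U2kᵀ * U2k = 1)
    (hbasis : Uk * Ukᵀ + U2k * U2kᵀ = 1)
    (W0 : Matrix (Fin p) (Fin n) ℝ)
    (Z : Matrix (Fin p) (Fin (n - k)) ℝ)
    (W' : Matrix (Fin p) (Fin n) ℝ)
    (hW' : W' = W0 + Z * U2kᵀ) :
    (∀ i : Fin m,
      euclidNorm ((W' - W0).mulVec (fun a => Cpres a i)) ≤ specNorm Z * σ ⟨k, hk⟩) ∧
    (∀ y : Fin k → ℝ, W'.mulVec (Uk.mulVec y) = W0.mulVec (Uk.mulVec y)) := by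
  have hUkUk : Ukᵀ * Uk = 1 :=
    hUk ▸ submatrix_transpose_mul_submatrix_eq_one hU1 (Fin.castLE_injective _)
  have hperp : U2kᵀ * Uk = 0 :=
    transpose_mul_eq_zero_of_mul_transpose_add_mul_transpose_eq_one hUkUk hU2k hbasis
  refine ⟨fun i => ?_, fun y => ?_⟩
  · set t : Fin r → ℝ := fun j => if ⟨k, hk⟩ ≤ j then σ j * V i j else 0
    have htail : U2kᵀ *ᵥ (U1 *ᵥ (σ * V i)) = U2kᵀ *ᵥ (U1 *ᵥ t) := by
      refine mulVec_mulVec_eq_of_mul_submatrix_eq_zero (Fin.castLE_injective hk.le) (hUk ▸ hperp)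
        fun j hj => ?_
      rw [Fin.range_castLE, Set.mem_ofPred_eq, not_lt] at hj
      exact (if_pos (Fin.le_def.mpr hj)).symm
    have ht : euclidNorm t ≤ σ ⟨k, hk⟩ :=
      (euclidNorm_tail_mul_le (fun j => (hσpos j).le) hσdec (V i) ⟨k, hk⟩).trans
        (mul_le_of_le_one_right (hσpos _).le (euclidNorm_row_le_one V hV i))
    rw [hW', add_sub_cancel_left, hSVD, col_mul_diagonal_mul_transpose, ← mulVec_mulVec, htail]
    calc euclidNorm (Z *ᵥ (U2kᵀ *ᵥ (U1 *ᵥ t)))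
        ≤ specNorm Z * euclidNorm (U2kᵀ *ᵥ (U1 *ᵥ t)) := euclidNorm_mulVec_le _ _
      _ ≤ specNorm Z * euclidNorm (U1 *ᵥ t) :=
        mul_le_mul_of_nonneg_left (euclidNorm_transpose_mulVec_le U2k hU2k _) (specNorm_nonneg Z)
      _ = specNorm Z * euclidNorm t := by rw [euclidNorm_mulVec_of_transpose_mul_self U1 hU1]
      _ ≤ specNorm Z * σ ⟨k, hk⟩ := mul_le_mul_of_nonneg_left ht (specNorm_nonneg Z)
  · have hUky : U2kᵀ *ᵥ (Uk *ᵥ y) = 0 := by rw [mulVec_mulVec, hperp, zero_mulVec]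
    rw [hW', add_mulVec, ← mulVec_mulVec, hUky, mulVec_zero, add_zero]
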